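/- Let X be a real random variable with E[X² log log(|X|+1)] < ∞. Then the series ∑_{n=1}^∞ P(|X² − σ²| > n / log log n) converges, where σ² = E[X²] and log x denotes log(max{e, x}). -/

import Mathlib

open MeasureTheory
open scoped ENNReal NNReal

/-- `log x := log (max e x)`, the truncated logarithm. -/
noncomputable def Llog (x : ℝ) : ℝ := Real.log (max (Real.exp 1) x)

lemma one_le_Llog (x : ℝ) : 1 ≤ Llog x := by
  have h : Real.exp 1 ≤ max (Real.exp 1) x := le_max_left _ _
  have := Real.log_le_log (Real.exp_pos 1) h
  rwa [Real.log_exp] at this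

lemma Llog_nonneg (x : ℝ) : 0 ≤ Llog x := le_trans zero_le_one (one_le_Llog x)

lemma Llog_mono : Monotone Llog := by
  intro a b hab
  exact Real.log_le_log (lt_max_of_lt_left (Real.exp_pos 1))
    (max_le_max le_rfl hab)

lemma log_le_Llog {x : ℝ} (hx : 0 < x) : Real.log x ≤ Llog x :=
  Real.log_le_log hx (le_max_right _ _)

lemma Llog_of_le {x : ℝ} (hx : x ≤ Real.exp 1) : Llog x = 1 := by
  rw [Llog, max_eq_left hx, Real.log_exp]

lemma Llog_mul {a b : ℝ} (ha : 1 ≤ a) (hb : 1 ≤ b) :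
    Llog (a * b) ≤ Llog a + Llog b := by
  rcases le_total (a * b) (Real.exp 1) with h | h
  · rw [Llog_of_le h]
    linarith [one_le_Llog a, one_le_Llog b]
  · rw [Llog, max_eq_right h, Real.log_mul (by linarith) (by linarith)]
    exact add_le_add (log_le_Llog (by linarith)) (log_le_Llog (by linarith))

lemma Llog_sq {t : ℝ} (ht : 0 ≤ t) : Llog (t ^ 2) ≤ 2 * Llog t := by
  rcases le_total (t ^ 2) (Real.exp 1) with h | h
  · rw [Llog_of_le h]; linarith [one_le_Llog t]
  · have ht0 : 0 < t := by nlinarith [Real.exp_pos 1]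
    rw [Llog, max_eq_right h, Real.log_pow]
    push_cast
    linarith [log_le_Llog ht0]

lemma two_le_exp_one : (2 : ℝ) ≤ Real.exp 1 := by
  have := Real.add_one_le_exp (1 : ℝ); linarith

/-- `log y ≤ y / e` for `y > 0`. -/
lemma log_le_div_exp {y : ℝ} (hy : 0 < y) : Real.log y ≤ y / Real.exp 1 := by
  have he : (0 : ℝ) < Real.exp 1 := Real.exp_pos 1
  have h1 : Real.log (y / Real.exp 1) ≤ y / Real.exp 1 - 1 :=
    Real.log_le_sub_one_of_pos (by positivity)
  rw [Real.log_div (ne_of_gt hy) (ne_of_gt he), Real.log_exp] at h1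
  linarith

lemma Llog_le_two_sqrt {x : ℝ} (hx : 1 ≤ x) : Llog x ≤ 2 * Real.sqrt x := by
  have hs : 1 ≤ Real.sqrt x := Real.one_le_sqrt.mpr hx
  rcases le_total x (Real.exp 1) with h | h
  · rw [Llog_of_le h]; linarith
  · rw [Llog, max_eq_right h]
    have h1 : Real.log (Real.sqrt x) ≤ Real.sqrt x - 1 :=
      Real.log_le_sub_one_of_pos (by linarith)
    rw [Real.log_sqrt (by linarith)] at h1
    linarith

lemma Llog_Llog_le_sqrt {x : ℝ} (hx : 1 ≤ x) :
    Llog (Llog x) ≤ Real.sqrt x := by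
  have hs : 1 ≤ Real.sqrt x := Real.one_le_sqrt.mpr hx
  rcases le_total (Llog x) (Real.exp 1) with h | h
  · rw [Llog_of_le h]; linarith
  · have he0 : (0 : ℝ) < Real.exp 1 := Real.exp_pos 1
    have he2 : (2 : ℝ) ≤ Real.exp 1 := two_le_exp_one
    have h1 : Real.log (Llog x) ≤ Llog x / Real.exp 1 :=
      log_le_div_exp (by linarith)
    have h2 : Llog x ≤ 2 * Real.sqrt x := Llog_le_two_sqrt hx
    have h3 : Llog x / Real.exp 1 ≤ Real.sqrt x := by
      rw [div_le_iff₀ he0]; nlinarith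
    rw [Llog, max_eq_right h]
    linarith

/-- double truncated log of a square -/
lemma lln_sq {t : ℝ} (ht : 0 ≤ t) :
    Llog (Llog (t ^ 2)) ≤ 2 * Llog (Llog t) := by
  have h1 : Llog (Llog (t ^ 2)) ≤ Llog (2 * Llog t) :=
    Llog_mono (Llog_sq ht)
  have h2 : Llog (2 * Llog t) ≤ Llog 2 + Llog (Llog t) :=
    Llog_mul (by norm_num) (one_le_Llog t)
  have h3 : Llog 2 = 1 := Llog_of_le two_le_exp_one
  linarith [one_le_Llog (Llog t)]

/-- key counting bound: if `(n+1)/lln(n+1) < t` then `n < 2 t lln t`. -/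
lemma count_bound {t : ℝ} (n : ℕ)
    (h : ((n : ℝ) + 1) / Llog (Llog ((n : ℝ) + 1)) < t) :
    (n : ℝ) < 2 * t * Llog (Llog t) := by
  set m : ℝ := (n : ℝ) + 1 with hm
  have hm1 : 1 ≤ m := by
    have := Nat.cast_nonneg (α := ℝ) n; linarith
  have hlm : (0 : ℝ) < Llog (Llog m) := lt_of_lt_of_le zero_lt_one (one_le_Llog _)
  have h1 : m < t * Llog (Llog m) := by
    rwa [div_lt_iff₀ hlm] at h
  have ht0 : 0 < t := by
    have : 0 < m / Llog (Llog m) := by positivity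
    linarith [h]
  have hsq : Llog (Llog m) ≤ Real.sqrt m := Llog_Llog_le_sqrt hm1
  have hs1 : 1 ≤ Real.sqrt m := Real.one_le_sqrt.mpr hm1
  have h2 : m < t * Real.sqrt m := by
    calc m < t * Llog (Llog m) := h1
      _ ≤ t * Real.sqrt m := by nlinarith
  have hmm : Real.sqrt m * Real.sqrt m = m := Real.mul_self_sqrt (by linarith)
  have h3 : Real.sqrt m < t := by nlinarith
  have h4 : m < t ^ 2 := by nlinarith
  have h5 : Llog (Llog m) ≤ Llog (Llog (t ^ 2)) := Llog_mono (Llog_mono h4.le)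
  have h6 : Llog (Llog (t ^ 2)) ≤ 2 * Llog (Llog t) := lln_sq ht0.le
  have : m < t * (2 * Llog (Llog t)) := by
    calc m < t * Llog (Llog m) := h1
      _ ≤ t * (2 * Llog (Llog t)) := by nlinarith
  nlinarith

set_option maxHeartbeats 1000000 in
theorem stmt_7 {Ω : Type*} [MeasurableSpace Ω] (μ : Measure Ω) [IsProbabilityMeasure μ]
    (X : Ω → ℝ) (hX : Measurable X)
    (hmom : Integrable (fun ω => (X ω) ^ 2 * Llog (Llog (|X ω| + 1))) μ)
    (σ2 : ℝ) (hσ2 : σ2 = ∫ ω, (X ω) ^ 2 ∂μ) :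
    ∑' n : ℕ,
      μ {ω | ((n : ℝ) + 1) / Llog (Llog ((n : ℝ) + 1)) < |(X ω) ^ 2 - σ2|} < ⊤ := by
  have hσ0 : 0 ≤ σ2 := by
    rw [hσ2]; exact integral_nonneg fun ω => sq_nonneg _
  set L : Ω → ℝ := fun ω => Llog (Llog (|X ω| + 1)) with hLdef
  set c₁ : ℝ := Llog (σ2 + 1) with hc₁
  set c₂ : ℝ := Llog (2 + c₁) with hc₂
  set a : ℝ := 2 * (c₂ + 1) * (1 + σ2) with ha
  set b : ℝ := 2 * (c₂ + 1) * σ2 + 1 with hb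
  set H : Ω → ℝ := fun ω => a * ((X ω) ^ 2 * L ω) + b with hHdef
  have hHint : Integrable H μ := (hmom.const_mul a).add (integrable_const b)
  -- the pointwise key bound
  have hkey : ∀ ω, 2 * |(X ω) ^ 2 - σ2| * Llog (Llog (|(X ω) ^ 2 - σ2|)) + 1 ≤ H ω := by
    intro ω
    set t : ℝ := |(X ω) ^ 2 - σ2| with htdef
    set u : ℝ := (X ω) ^ 2 + σ2 with hudef
    have hx2 : 0 ≤ (X ω) ^ 2 := sq_nonneg _
    have ht0 : 0 ≤ t := abs_nonneg _
    have htu : t ≤ u := by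
      rw [htdef, hudef, abs_le]
      constructor <;> nlinarith
    have hu0 : 0 ≤ u := le_trans ht0 htu
    -- step 1 : t lln t ≤ u lln u
    have s1 : t * Llog (Llog t) ≤ u * Llog (Llog u) :=
      mul_le_mul htu (Llog_mono (Llog_mono htu)) (Llog_nonneg _) hu0
    -- step 2 : lln u ≤ (c₂ + 1) * L ω
    have hax : 1 ≤ (|X ω| + 1) := by linarith [abs_nonneg (X ω)]
    have hL1 : 1 ≤ L ω := one_le_Llog _
    have hv : u ≤ (|X ω| + 1) ^ 2 * (σ2 + 1) := by
      have h1 : (X ω) ^ 2 ≤ (|X ω| + 1) ^ 2 := by nlinarith [abs_nonneg (X ω), sq_abs (X ω)]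
      have h2 : 1 ≤ (|X ω| + 1) ^ 2 := by nlinarith [abs_nonneg (X ω)]
      nlinarith
    have s2a : Llog u ≤ (2 + c₁) * Llog (|X ω| + 1) := by
      have h1 : Llog u ≤ Llog ((|X ω| + 1) ^ 2 * (σ2 + 1)) := Llog_mono hv
      have h2 : Llog ((|X ω| + 1) ^ 2 * (σ2 + 1)) ≤
          Llog ((|X ω| + 1) ^ 2) + Llog (σ2 + 1) :=
        Llog_mul (by nlinarith [abs_nonneg (X ω)]) (by linarith)
      have h3 : Llog ((|X ω| + 1) ^ 2) ≤ 2 * Llog (|X ω| + 1) :=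
        Llog_sq (by positivity)
      have h4 : 1 ≤ Llog (|X ω| + 1) := one_le_Llog _
      have h5 : 1 ≤ c₁ := one_le_Llog _
      nlinarith
    have s2 : Llog (Llog u) ≤ (c₂ + 1) * L ω := by
      have h1 : Llog (Llog u) ≤ Llog ((2 + c₁) * Llog (|X ω| + 1)) :=
        Llog_mono s2a
      have h2 : Llog ((2 + c₁) * Llog (|X ω| + 1)) ≤ c₂ + L ω := by
        have h5 : 1 ≤ c₁ := one_le_Llog _
        exact Llog_mul (by linarith) (one_le_Llog _)
      have h3 : 1 ≤ c₂ := one_le_Llog _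
      nlinarith
    -- step 3 : L ≤ 1 + X² L
    have s3 : L ω ≤ 1 + (X ω) ^ 2 * L ω := by
      rcases le_total (|X ω|) 1 with hc | hc
      · have h1 : |X ω| + 1 ≤ Real.exp 1 := by linarith [two_le_exp_one]
        have h2 : L ω = 1 := by
          rw [hLdef]; simp only
          rw [Llog_of_le h1, Llog_of_le (by linarith [two_le_exp_one, Real.exp_pos 1] : (1:ℝ) ≤ Real.exp 1)]
        rw [h2]; nlinarith
      · have h1 : 1 ≤ (X ω) ^ 2 := by nlinarith [sq_abs (X ω)]
        nlinarith
    -- combine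
    have hc₂1 : 1 ≤ c₂ := one_le_Llog _
    have final : t * Llog (Llog t) ≤ (c₂ + 1) * (σ2 + (1 + σ2) * ((X ω) ^ 2 * L ω)) := by
      have h1 : u * Llog (Llog u) ≤ u * ((c₂ + 1) * L ω) := by
        have := Llog_nonneg (Llog u); nlinarith
      have h2 : u * ((c₂ + 1) * L ω) = (c₂ + 1) * ((X ω) ^ 2 * L ω + σ2 * L ω) := by
        rw [hudef]; ring
      have h3 : σ2 * L ω ≤ σ2 * (1 + (X ω) ^ 2 * L ω) := by nlinarith
      nlinarith [mul_nonneg hx2 (le_trans zero_le_one hL1)]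
    have heq : a * ((X ω) ^ 2 * L ω) + b
        = 2 * ((c₂ + 1) * (σ2 + (1 + σ2) * ((X ω) ^ 2 * L ω))) + 1 := by
      rw [ha, hb]; ring
    show 2 * t * Llog (Llog t) + 1 ≤ a * ((X ω) ^ 2 * L ω) + b
    rw [heq]
    linarith
  -- now the measure-theoretic part
  set S : ℕ → Set Ω := fun n =>
    {ω | ((n : ℝ) + 1) / Llog (Llog ((n : ℝ) + 1)) < |(X ω) ^ 2 - σ2|} with hSdef
  have hYm : Measurable fun ω => |(X ω) ^ 2 - σ2| := ((hX.pow_const 2).sub measurable_const).abs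
  have hSm : ∀ n, MeasurableSet (S n) := fun n => measurableSet_lt measurable_const hYm
  have key : (∑' n : ℕ, μ (S n)) =
      ∫⁻ ω, ∑' n : ℕ, (S n).indicator (1 : Ω → ℝ≥0∞) ω ∂μ := by
    rw [lintegral_tsum fun n => ((measurable_one.indicator (hSm n)).aemeasurable)]
    congr 1
    ext n
    rw [lintegral_indicator_one (hSm n)]
  have hpt : ∀ ω, (∑' n : ℕ, (S n).indicator (1 : Ω → ℝ≥0∞) ω) ≤ ENNReal.ofReal (H ω) := by
    intro ω
    set t : ℝ := |(X ω) ^ 2 - σ2| with htdef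
    set B : ℝ := 2 * t * Llog (Llog t) with hB
    have hB0 : 0 ≤ B := by
      have := abs_nonneg ((X ω) ^ 2 - σ2)
      have := Llog_nonneg (Llog t)
      rw [hB]; positivity
    set N : ℕ := ⌈B⌉₊ with hN
    have step1 : (∑' n : ℕ, (S n).indicator (1 : Ω → ℝ≥0∞) ω) ≤
        ∑' n : ℕ, (if n < N then (1 : ℝ≥0∞) else 0) := by
      apply Summable.tsum_le_tsum _ ENNReal.summable ENNReal.summable
      intro n
      by_cases hω : ω ∈ S n
      · have hn : (n : ℝ) < B := count_bound n hω
        rw [Set.indicator_of_mem hω, if_pos (Nat.lt_ceil.mpr hn)]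
        exact le_rfl
      · rw [Set.indicator_of_notMem hω]; exact zero_le
    have step2 : (∑' n : ℕ, (if n < N then (1 : ℝ≥0∞) else 0)) = N := by
      rw [tsum_eq_sum (s := Finset.range N)
        (fun n hn => if_neg (fun h => hn (Finset.mem_range.mpr h)))]
      rw [Finset.sum_congr rfl fun n hn => if_pos (Finset.mem_range.mp hn)]
      simp
    have step3 : (N : ℝ≥0∞) ≤ ENNReal.ofReal (H ω) := by
      rw [← ENNReal.ofReal_natCast]
      apply ENNReal.ofReal_le_ofReal
      have h1 : (N : ℝ) < B + 1 := Nat.ceil_lt_add_one hB0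
      have h2 := hkey ω
      calc (N : ℝ) ≤ B + 1 := h1.le
        _ ≤ H ω := by rw [hB]; linarith
    calc (∑' n : ℕ, (S n).indicator (1 : Ω → ℝ≥0∞) ω)
        ≤ ∑' n : ℕ, (if n < N then (1 : ℝ≥0∞) else 0) := step1
      _ = N := step2
      _ ≤ ENNReal.ofReal (H ω) := step3
  calc (∑' n : ℕ, μ (S n))
      = ∫⁻ ω, ∑' n : ℕ, (S n).indicator (1 : Ω → ℝ≥0∞) ω ∂μ := key
    _ ≤ ∫⁻ ω, ENNReal.ofReal (H ω) ∂μ := lintegral_mono hpt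
    _ < ⊤ := hHint.lintegral_lt_top
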